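/- For every integer n ≥ 3 and every integer l ≥ 1 with 3l < n, the following strict interlacing relations hold: (1) ξ·R_{l−1} and P_l strictly interlace, and the largest among their roots (namely 0) is a root of ξ·R_{l−1}; (2) P_l and P_{l−1} strictly interlace, and the largest root is a root of P_l; (3) Q_l and P_l strictly interlace, and the largest root is a root of P_l; (4) Q_l and Q_{l−1} strictly interlace, and the largest root is a root of Q_l; (5) R_l and Q_l strictly interlace, and the largest root is a root of Q_l; (6) R_l and R_{l−1} strictly interlace, and the largest root is a root of R_l. -/

import Mathlib

/-!
By induction on `l`, the polynomials `P_l`, `Q_l`, `R_l` are monic of degree `l` with simple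
negative roots `r₀ < q₀ < p₀ < r₁ < q₁ < p₁ < ⋯ < p_{l-1} < 0`. Each of the three recurrence
steps has the shape `F = g + c·h` with `c > 0`, where `g` and `h` are monic of degrees `k + 1`
and `k` with interlacing roots. At the roots of `g` and of `h` the sign of `F` alternates, so `F`
has a root in each gap `(hᵢ, gᵢ₊₁)`; dividing these `k` roots off leaves a linear factor, whose
root lies left of `g₀` by the sign of `F(g₀)`. Thus the roots of `F` interlace both those of `g`
and those of `h`: this gives the six relations and propagates the ordering to the next level.
-/

/-- Coefficient in the recurrence for `P_l`. -/
noncomputable def cP (n l : ℕ) : ℝ :=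
  ((n : ℝ) - 3 * l + 2) * ((n : ℝ) - 3 * l + 3) * (3 * (l : ℝ) - 2) * (3 * (l : ℝ) - 1)

/-- Coefficient in the recurrence for `Q_l`. -/
noncomputable def cQ (n l : ℕ) : ℝ :=
  ((n : ℝ) - 3 * l + 1) * ((n : ℝ) - 3 * l + 2) * (3 * (l : ℝ) - 1) * (3 * (l : ℝ))

/-- Coefficient in the recurrence for `R_l`. -/
noncomputable def cR (n l : ℕ) : ℝ :=
  ((n : ℝ) - 3 * l) * ((n : ℝ) - 3 * l + 1) * (3 * (l : ℝ)) * (3 * (l : ℝ) + 1)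

/-- The triple `(P_l, Q_l, R_l)` of real polynomials in `ξ` defined by
`P₀ = Q₀ = R₀ = 1` and
`P_l = ξ·R_{l-1} + (n-3l+2)(n-3l+3)(3l-2)(3l-1)·P_{l-1}`,
`Q_l = P_l + (n-3l+1)(n-3l+2)(3l-1)(3l)·Q_{l-1}`,
`R_l = Q_l + (n-3l)(n-3l+1)(3l)(3l+1)·R_{l-1}`. -/
noncomputable def PQR (n : ℕ) : ℕ → Polynomial ℝ × Polynomial ℝ × Polynomial ℝ
  | 0 => (1, 1, 1)
  | l + 1 =>
      let prev := PQR n l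
      let P := Polynomial.X * prev.2.2 + Polynomial.C (cP n (l + 1)) * prev.1
      let Q := P + Polynomial.C (cQ n (l + 1)) * prev.2.1
      let R := Q + Polynomial.C (cR n (l + 1)) * prev.2.2
      (P, Q, R)

/-- Two real polynomials (with only real simple roots) strictly interlace: their root sets
are disjoint and, in the merged strictly increasing list of all their roots, roots of the
two polynomials alternate; equivalently, strictly between any two distinct roots of either
polynomial there is a root of the other one. -/
def StrictInterlace (p q : Polynomial ℝ) : Prop :=
  (∀ x : ℝ, p.IsRoot x → ¬ q.IsRoot x) ∧
  (∀ x y : ℝ, p.IsRoot x → p.IsRoot y → x < y → ∃ z : ℝ, q.IsRoot z ∧ x < z ∧ z < y) ∧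
  (∀ x y : ℝ, q.IsRoot x → q.IsRoot y → x < y → ∃ z : ℝ, p.IsRoot z ∧ x < z ∧ z < y)

/-- The largest among the merged roots of `p` and `q` is a root of `r`. -/
def LargestMergedRootOf (p q r : Polynomial ℝ) : Prop :=
  ∃ x : ℝ, r.IsRoot x ∧ ∀ y : ℝ, (p.IsRoot y ∨ q.IsRoot y) → y ≤ x
open Polynomial Finset

noncomputable def prodXSubC {m : ℕ} (u : Fin m → ℝ) : ℝ[X] :=
  ∏ i, (X - C (u i))

lemma prodXSubC_monic {m : ℕ} (u : Fin m → ℝ) : (prodXSubC u).Monic :=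
  monic_prod_of_monic _ _ fun i _ => monic_X_sub_C (u i)

lemma natDegree_prodXSubC {m : ℕ} (u : Fin m → ℝ) : (prodXSubC u).natDegree = m := by
  simp [prodXSubC, natDegree_prod _ _ fun i _ => X_sub_C_ne_zero (u i)]

lemma eval_prodXSubC {m : ℕ} (u : Fin m → ℝ) (t : ℝ) :
    (prodXSubC u).eval t = ∏ i, (t - u i) := by
  simp [prodXSubC, eval_prod]

lemma isRoot_prodXSubC {m : ℕ} {u : Fin m → ℝ} {t : ℝ} :
    (prodXSubC u).IsRoot t ↔ ∃ i, u i = t := by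
  rw [IsRoot.def, eval_prodXSubC, prod_eq_zero_iff]
  simp [sub_eq_zero, eq_comm]

lemma prodXSubC_cons {m : ℕ} (a : ℝ) (u : Fin m → ℝ) :
    prodXSubC (Fin.cons a u : Fin (m + 1) → ℝ) = (X - C a) * prodXSubC u := by
  simp [prodXSubC, Fin.prod_univ_succ]

lemma X_mul_prodXSubC {m : ℕ} (u : Fin m → ℝ) :
    X * prodXSubC u = prodXSubC (Fin.snoc u 0 : Fin (m + 1) → ℝ) := by
  simp [prodXSubC, Fin.prod_univ_castSucc, mul_comm]

lemma neg_one_pow_card_mul_prod_sub_pos {ι : Type*} [Fintype ι] (u : ι → ℝ) {t : ℝ}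
    (ht : ∀ i, u i ≠ t) : 0 < (-1) ^ #{i | t < u i} * ∏ i, (t - u i) := by
  have hsplit : (-1) ^ #{i | t < u i} * ∏ i, (t - u i) =
      ∏ i, if t < u i then -(t - u i) else t - u i := by
    rw [prod_ite, prod_neg, ← prod_filter_mul_prod_filter_not univ (fun i => t < u i)]
    ring
  rw [hsplit]
  refine prod_pos fun i _ => ?_
  split_ifs with h
  · linarith
  · exact sub_pos.2 ((not_lt.1 h).lt_of_ne (ht i))

lemma card_filter_le_val (s k : ℕ) : #{i : Fin s | k ≤ (i : ℕ)} = s - k := by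
  have := card_filter_add_card_filter_not (s := univ) fun i : Fin s => (i : ℕ) < k
  simp only [Fin.card_filter_val_lt, not_lt, card_univ, Fintype.card_fin] at this
  omega

lemma neg_one_pow_sub_mul_prod_sub_pos {s : ℕ} (u : Fin s → ℝ) {t : ℝ} (k : ℕ)
    (hlt : ∀ i : Fin s, (i : ℕ) < k → u i < t) (hgt : ∀ i : Fin s, k ≤ (i : ℕ) → t < u i) :
    0 < (-1) ^ (s - k) * ∏ i, (t - u i) := by
  have hcard : #{i | t < u i} = s - k := by
    rw [← card_filter_le_val s k]
    congr 1
    ext i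
    simp only [mem_filter, mem_univ, true_and]
    exact ⟨fun h => not_lt.1 fun hi => (hlt i hi).not_gt h, hgt i⟩
  rw [← hcard]
  refine neg_one_pow_card_mul_prod_sub_pos u fun i => ?_
  rcases lt_or_ge (i : ℕ) k with hi | hi
  · exact (hlt i hi).ne
  · exact (hgt i hi).ne'

lemma exists_isRoot_Ioo_of_mul_neg (p : ℝ[X]) {a b : ℝ} (hab : a ≤ b)
    (h : p.eval a * p.eval b < 0) : ∃ z ∈ Set.Ioo a b, p.IsRoot z := by
  rcases lt_or_gt_of_ne (left_ne_zero_of_mul h.ne) with ha | ha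
  · exact intermediate_value_Ioo hab p.continuousOn ⟨ha, by nlinarith⟩
  · exact intermediate_value_Ioo' hab p.continuousOn ⟨by nlinarith, ha⟩

lemma exists_eq_prodXSubC_cons {m : ℕ} {F : ℝ[X]} (hF : F.Monic) (hdeg : F.natDegree = m + 1)
    {z : Fin m → ℝ} (hz : Function.Injective z) (hroot : ∀ i, F.IsRoot (z i)) :
    ∃ a, F = prodXSubC (Fin.cons a z : Fin (m + 1) → ℝ) := by
  obtain ⟨q, rfl⟩ : prodXSubC z ∣ F :=
    prod_dvd_of_coprime ((pairwise_coprime_X_sub_C hz).set_pairwise _)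
      fun i _ => dvd_iff_isRoot.2 (hroot i)
  have hq : q.Monic := (prodXSubC_monic z).of_mul_monic_left hF
  have hq1 : q.natDegree = 1 := by
    rw [(prodXSubC_monic z).natDegree_mul hq, natDegree_prodXSubC] at hdeg
    omega
  refine ⟨-q.coeff 0, ?_⟩
  rw [prodXSubC_cons, hq.eq_X_add_C hq1, mul_comm]
  simp

lemma StrictInterlace.symm {p q : ℝ[X]} (h : StrictInterlace p q) : StrictInterlace q p :=
  ⟨fun x hq hp => h.1 x hp hq, h.2.2, h.2.1⟩

-- The merged list of entries alternates as `u 0 < v 0 < u 1 < v 1 < ⋯`.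
structure Interlaces {a b : ℕ} (u : Fin a → ℝ) (v : Fin b → ℝ) : Prop where
  left_lt_right : ∀ (i : Fin a) (j : Fin b), (i : ℕ) ≤ j → u i < v j
  right_lt_left : ∀ (j : Fin b) (i : Fin a), (j : ℕ) < i → v j < u i

namespace Interlaces

variable {a b m : ℕ}

lemma strictMono_left {u : Fin a → ℝ} {v : Fin b → ℝ} (h : Interlaces u v) (hab : a ≤ b + 1) :
    StrictMono u := fun i i' hii' =>
  (h.left_lt_right i ⟨i, by omega⟩ le_rfl).trans (h.right_lt_left _ i' hii')

lemma strictMono_right {u : Fin a → ℝ} {v : Fin b → ℝ} (h : Interlaces u v) (hba : b ≤ a) :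
    StrictMono v := fun j j' hjj' =>
  (h.right_lt_left j ⟨j + 1, by omega⟩ (by simp)).trans (h.left_lt_right _ j' hjj')

lemma strictInterlace {u : Fin a → ℝ} {v : Fin b → ℝ} (h : Interlaces u v) (hab : a ≤ b + 1)
    (hba : b ≤ a) : StrictInterlace (prodXSubC u) (prodXSubC v) := by
  simp only [StrictInterlace, isRoot_prodXSubC]
  refine ⟨?_, ?_, ?_⟩
  · rintro _ ⟨i, rfl⟩ ⟨j, hj⟩
    rcases le_or_gt (i : ℕ) j with hij | hji
    · exact (h.left_lt_right i j hij).ne' hj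
    · exact (h.right_lt_left j i hji).ne hj
  · rintro _ _ ⟨i, rfl⟩ ⟨i', rfl⟩ hlt
    have hii' : i < i' := (h.strictMono_left hab).lt_iff_lt.1 hlt
    exact ⟨v ⟨i, by omega⟩, ⟨_, rfl⟩, h.left_lt_right _ _ le_rfl, h.right_lt_left _ _ hii'⟩
  · rintro _ _ ⟨j, rfl⟩ ⟨j', rfl⟩ hlt
    have hjj' : j < j' := (h.strictMono_right hba).lt_iff_lt.1 hlt
    exact ⟨u ⟨j + 1, by omega⟩, ⟨_, rfl⟩, h.right_lt_left _ _ (by simp), h.left_lt_right _ _ hjj'⟩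

lemma le_left_last {u : Fin (m + 1) → ℝ} {v : Fin m → ℝ} (h : Interlaces u v) {t : ℝ}
    (ht : (prodXSubC u).IsRoot t ∨ (prodXSubC v).IsRoot t) : t ≤ u (Fin.last m) := by
  rcases ht with ht | ht <;> obtain ⟨i, rfl⟩ := isRoot_prodXSubC.1 ht
  · exact (h.strictMono_left (by omega)).monotone (Fin.le_last i)
  · exact (h.right_lt_left i (Fin.last m) (by simp)).le

lemma le_right_last {u v : Fin (m + 1) → ℝ} (h : Interlaces u v) {t : ℝ}
    (ht : (prodXSubC u).IsRoot t ∨ (prodXSubC v).IsRoot t) : t ≤ v (Fin.last m) := by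
  rcases ht with ht | ht <;> obtain ⟨i, rfl⟩ := isRoot_prodXSubC.1 ht
  · exact (h.left_lt_right i (Fin.last m) (Fin.is_le i)).le
  · exact (h.strictMono_right le_rfl).monotone (Fin.le_last i)

lemma largestMergedRootOf_left {u : Fin (m + 1) → ℝ} {v : Fin m → ℝ} (h : Interlaces u v) :
    LargestMergedRootOf (prodXSubC u) (prodXSubC v) (prodXSubC u) :=
  ⟨u (Fin.last m), isRoot_prodXSubC.2 ⟨_, rfl⟩, fun _ => h.le_left_last⟩

lemma largestMergedRootOf_right {u v : Fin (m + 1) → ℝ} (h : Interlaces u v) :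
    LargestMergedRootOf (prodXSubC u) (prodXSubC v) (prodXSubC v) :=
  ⟨v (Fin.last m), isRoot_prodXSubC.2 ⟨_, rfl⟩, fun _ => h.le_right_last⟩

lemma of_lt_of_lt {g z : Fin (m + 1) → ℝ} {h : Fin m → ℝ} (hgh : Interlaces g h)
    (hzg : ∀ i, z i < g i) (hhz : ∀ i : Fin m, h i < z i.succ) :
    Interlaces z g ∧ Interlaces z h := by
  have hg := (hgh.strictMono_left (by omega)).monotone
  have hh := (hgh.strictMono_right (by omega)).monotone
  have hsucc : ∀ {j : ℕ} {i : Fin (m + 1)}, j < i → ∃ i' : Fin m, i'.succ = i ∧ j ≤ i' :=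
    fun {j i} hji => by
      obtain ⟨i', rfl⟩ := (Fin.exists_succ_eq (x := i)).2 (by rintro rfl; simp at hji)
      exact ⟨i', rfl, by simp at hji; omega⟩
  refine ⟨⟨fun i j hij => (hzg i).trans_le (hg hij), fun j i hji => ?_⟩,
    ⟨fun i j hij => (hzg i).trans (hgh.left_lt_right i j hij), fun j i hji => ?_⟩⟩
  · obtain ⟨i', rfl, hji'⟩ := hsucc hji
    exact (hgh.left_lt_right j i' hji').trans (hhz i')
  · obtain ⟨i', rfl, hji'⟩ := hsucc hji
    exact (hh hji').trans_lt (hhz i')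

variable {g : Fin (m + 1) → ℝ} {h : Fin m → ℝ} {c : ℝ}

lemma neg_one_pow_mul_eval_left_pos (hgh : Interlaces g h) (hc : 0 < c) (j : Fin (m + 1)) :
    0 < (-1) ^ (m - j) * (prodXSubC g + C c * prodXSubC h).eval (g j) := by
  have hsign := neg_one_pow_sub_mul_prod_sub_pos h (t := g j) j
    (fun i hi => hgh.right_lt_left i j hi) (fun i hi => hgh.left_lt_right j i hi)
  rw [eval_add, isRoot_prodXSubC.2 ⟨j, rfl⟩, eval_mul, eval_C, eval_prodXSubC, zero_add,
    mul_left_comm]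
  exact mul_pos hc hsign

lemma neg_one_pow_mul_eval_right_pos (hgh : Interlaces g h) (i : Fin m) :
    0 < (-1) ^ (m - i) * (prodXSubC g + C c * prodXSubC h).eval (h i) := by
  have hsign := neg_one_pow_sub_mul_prod_sub_pos g (t := h i) (i + 1)
    (fun j hj => hgh.left_lt_right j i (by omega)) (fun j hj => hgh.right_lt_left i j hj)
  rw [eval_add, eval_mul, isRoot_prodXSubC.2 ⟨i, rfl⟩, mul_zero, add_zero, eval_prodXSubC]
  simpa using hsign

lemma exists_prodXSubC_add_C_mul (hgh : Interlaces g h) (hc : 0 < c) :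
    ∃ z : Fin (m + 1) → ℝ, prodXSubC g + C c * prodXSubC h = prodXSubC z ∧ Interlaces z g ∧ Interlaces z h := by
  set F := prodXSubC g + C c * prodXSubC h
  have hlt : (C c * prodXSubC h).degree < (prodXSubC g).degree := by
    rw [degree_C_mul hc.ne', degree_eq_natDegree (prodXSubC_monic h).ne_zero,
      degree_eq_natDegree (prodXSubC_monic g).ne_zero, natDegree_prodXSubC, natDegree_prodXSubC]
    exact_mod_cast m.lt_succ_self
  have hdeg : F.natDegree = m + 1 := by
    rw [natDegree_add_eq_left_of_degree_lt hlt, natDegree_prodXSubC]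
  have hgap : ∀ i : Fin m, ∃ z ∈ Set.Ioo (h i) (g i.succ), F.IsRoot z := by
    intro i
    refine exists_isRoot_Ioo_of_mul_neg F (hgh.right_lt_left i i.succ (by simp)).le ?_
    have hh := hgh.neg_one_pow_mul_eval_right_pos (c := c) i
    have hg := hgh.neg_one_pow_mul_eval_left_pos hc i.succ
    rw [Fin.val_succ, show m - i = m - (i + 1) + 1 by omega, pow_succ] at *
    have hsq : ((-1 : ℝ) ^ (m - (i + 1))) ^ 2 = 1 := by rw [← pow_mul, pow_mul']; norm_num
    nlinarith [mul_pos hh hg]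
  choose zs hzs hroot using hgap
  have hzs_mono : StrictMono zs := fun i i' hii' =>
    (hzs i).2.trans ((hgh.left_lt_right i.succ i' (by simpa using hii')).trans (hzs i').1)
  obtain ⟨a, hFa⟩ := exists_eq_prodXSubC_cons ((prodXSubC_monic g).add_of_left hlt) hdeg
    hzs_mono.injective hroot
  have ha : a < g 0 := by
    have hF := hgh.neg_one_pow_mul_eval_left_pos hc 0
    have hzs_sign := neg_one_pow_sub_mul_prod_sub_pos zs (t := g 0) 0 (by simp)
      fun i _ => (hgh.left_lt_right 0 i (Nat.zero_le _)).trans (hzs i).1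
    rw [hFa, prodXSubC_cons, eval_mul, eval_prodXSubC, mul_left_comm] at hF
    simp only [Fin.val_zero, Nat.sub_zero, eval_sub, eval_X, eval_C] at hF hzs_sign
    linarith [pos_of_mul_pos_left hF hzs_sign.le]
  refine ⟨Fin.cons a zs, hFa, hgh.of_lt_of_lt (Fin.cases ha fun i => (hzs i).2) ?_⟩
  exact fun i => by simpa using (hzs i).1

end Interlaces

section PQR

variable {n l m : ℕ}

lemma cP_pos (hl : 1 ≤ l) (h : 3 * l < n + 2) : 0 < cP n l := by
  have hl' : (1 : ℝ) ≤ l := by exact_mod_cast hl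
  have h' : (3 * l : ℝ) < n + 2 := by exact_mod_cast h
  unfold cP
  exact mul_pos (mul_pos (mul_pos (by linarith) (by linarith)) (by linarith)) (by linarith)

lemma cQ_pos (hl : 1 ≤ l) (h : 3 * l < n + 1) : 0 < cQ n l := by
  have hl' : (1 : ℝ) ≤ l := by exact_mod_cast hl
  have h' : (3 * l : ℝ) < n + 1 := by exact_mod_cast h
  unfold cQ
  exact mul_pos (mul_pos (mul_pos (by linarith) (by linarith)) (by linarith)) (by linarith)

lemma cR_pos (hl : 1 ≤ l) (h : 3 * l < n) : 0 < cR n l := by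
  have hl' : (1 : ℝ) ≤ l := by exact_mod_cast hl
  have h' : (3 * l : ℝ) < n := by exact_mod_cast h
  unfold cR
  exact mul_pos (mul_pos (mul_pos (by linarith) (by linarith)) (by linarith)) (by linarith)

-- The roots of `R_m`, `Q_m`, `P_m` are `r`, `q`, `p`, ordered as
-- `r 0 < q 0 < p 0 < r 1 < q 1 < p 1 < ⋯ < p (m - 1) < 0`.
structure PQRRoots (n m : ℕ) (p q r : Fin m → ℝ) : Prop where
  eq : PQR n m = (prodXSubC p, prodXSubC q, prodXSubC r)
  r_lt_q : ∀ i, r i < q i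
  q_lt_p : ∀ i, q i < p i
  snoc_interlaces : Interlaces (Fin.snoc r 0 : Fin (m + 1) → ℝ) p

lemma PQRRoots.succ {p q r : Fin m → ℝ} (hI : PQRRoots n m p q r) (h : 3 * (m + 1) < n) :
    ∃ x y w : Fin (m + 1) → ℝ, PQRRoots n (m + 1) x y w ∧
      Interlaces x (Fin.snoc r 0 : Fin (m + 1) → ℝ) ∧ Interlaces x p ∧ Interlaces y x ∧
      Interlaces y q ∧ Interlaces w y ∧ Interlaces w r := by
  obtain ⟨x, hx, hxg, hxp⟩ :=
    hI.snoc_interlaces.exists_prodXSubC_add_C_mul (cP_pos (n := n) (l := m + 1) (by omega) (by omega))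
  have hxq : Interlaces x q :=
    ⟨fun i j hij => ((hxg.left_lt_right i j.castSucc hij).trans_eq (by simp)).trans (hI.r_lt_q j),
      fun j i hji => (hI.q_lt_p j).trans (hxp.right_lt_left j i hji)⟩
  obtain ⟨y, hy, hyx, hyq⟩ := hxq.exists_prodXSubC_add_C_mul (cQ_pos (n := n) (l := m + 1) (by omega) (by omega))
  have hyr : Interlaces y r :=
    ⟨fun i j hij => (hyx.left_lt_right i j.castSucc hij).trans
        ((hxg.left_lt_right j.castSucc j.castSucc le_rfl).trans_eq (by simp)),
      fun j i hji => (hI.r_lt_q j).trans (hyq.right_lt_left j i hji)⟩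
  obtain ⟨w, hw, hwy, hwr⟩ := hyr.exists_prodXSubC_add_C_mul (cR_pos (by omega) h)
  have hwx : Interlaces (Fin.snoc w 0 : Fin (m + 2) → ℝ) x := by
    refine ⟨fun i j hij => ?_, fun j i hji => ?_⟩
    · obtain ⟨i, rfl⟩ := (Fin.exists_castSucc_eq (i := i)).2 (by rintro rfl; simp at hij; omega)
      simpa using (hwy.left_lt_right i j (by simpa using hij)).trans (hyx.left_lt_right j j le_rfl)
    · induction i using Fin.lastCases with
      | last => simpa using hxg.left_lt_right j (Fin.last m) (Fin.is_le j)
      | cast i =>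
        have hji' : (j : ℕ) < i := by simpa using hji
        have hj : (j : ℕ) < m := by omega
        simpa using ((hxg.left_lt_right j (Fin.castSucc ⟨j, hj⟩) le_rfl).trans_eq
          (Fin.snoc_castSucc ..)).trans
          (hwr.right_lt_left ⟨j, hj⟩ i hji')
  refine ⟨x, y, w, ⟨?_, fun i => hwy.left_lt_right i i le_rfl,
    fun i => hyx.left_lt_right i i le_rfl, hwx⟩, hxg, hxp, hyx, hyq, hwy, hwr⟩
  rw [← hw, ← hy, ← hx, ← X_mul_prodXSubC]
  simp only [PQR, hI.eq]

lemma exists_PQRRoots (h : 3 * m < n) : ∃ p q r : Fin m → ℝ, PQRRoots n m p q r := by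
  induction m with
  | zero =>
    refine ⟨Fin.elim0, Fin.elim0, Fin.elim0, ⟨?_, fun i => i.elim0, fun i => i.elim0, ?_⟩⟩
    · simp [PQR, prodXSubC]
    · exact ⟨fun _ j => j.elim0, fun j => j.elim0⟩
  | succ m ih =>
    obtain ⟨p, q, r, hI⟩ := ih (by omega)
    obtain ⟨x, y, w, hI', -⟩ := hI.succ h
    exact ⟨x, y, w, hI'⟩

end PQR

theorem PQR_interlacing_general (n : ℕ) (l : ℕ) (hl : 1 ≤ l) (h3l : 3 * l < n) :
    -- (1) ξ·R_{l-1} ← P_l : the largest root, namely 0, is a root of ξ·R_{l-1}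
    (StrictInterlace (Polynomial.X * (PQR n (l - 1)).2.2) (PQR n l).1 ∧
      (Polynomial.X * (PQR n (l - 1)).2.2).IsRoot 0 ∧
      (∀ y : ℝ, ((Polynomial.X * (PQR n (l - 1)).2.2).IsRoot y ∨ (PQR n l).1.IsRoot y) → y ≤ 0) ∧
      LargestMergedRootOf (Polynomial.X * (PQR n (l - 1)).2.2) (PQR n l).1
        (Polynomial.X * (PQR n (l - 1)).2.2)) ∧
    -- (2) P_l ← P_{l-1} reversed: largest root belongs to P_l
    (StrictInterlace (PQR n l).1 (PQR n (l - 1)).1 ∧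
      LargestMergedRootOf (PQR n l).1 (PQR n (l - 1)).1 (PQR n l).1) ∧
    -- (3) Q_l and P_l : largest root belongs to P_l
    (StrictInterlace (PQR n l).2.1 (PQR n l).1 ∧
      LargestMergedRootOf (PQR n l).2.1 (PQR n l).1 (PQR n l).1) ∧
    -- (4) Q_l and Q_{l-1} : largest root belongs to Q_l
    (StrictInterlace (PQR n l).2.1 (PQR n (l - 1)).2.1 ∧
      LargestMergedRootOf (PQR n l).2.1 (PQR n (l - 1)).2.1 (PQR n l).2.1) ∧
    -- (5) R_l and Q_l : largest root belongs to Q_l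
    (StrictInterlace (PQR n l).2.2 (PQR n l).2.1 ∧
      LargestMergedRootOf (PQR n l).2.2 (PQR n l).2.1 (PQR n l).2.1) ∧
    -- (6) R_l and R_{l-1} : largest root belongs to R_l
    (StrictInterlace (PQR n l).2.2 (PQR n (l - 1)).2.2 ∧
      LargestMergedRootOf (PQR n l).2.2 (PQR n (l - 1)).2.2 (PQR n l).2.2) := by
  obtain ⟨m, rfl⟩ : ∃ m, l = m + 1 := ⟨l - 1, by omega⟩
  obtain ⟨p, q, r, hI⟩ := exists_PQRRoots (n := n) (m := m) (by omega)
  obtain ⟨x, y, w, hI', hxg, hxp, hyx, hyq, hwy, hwr⟩ := hI.succ h3l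
  simp only [Nat.add_sub_cancel, hI'.eq, hI.eq, X_mul_prodXSubC]
  have hroot : (prodXSubC (Fin.snoc r 0 : Fin (m + 1) → ℝ)).IsRoot 0 :=
    isRoot_prodXSubC.2 ⟨Fin.last m, by simp⟩
  have hle : ∀ t, (prodXSubC (Fin.snoc r 0 : Fin (m + 1) → ℝ)).IsRoot t ∨
      (prodXSubC x).IsRoot t → t ≤ 0 := fun t ht => by
    simpa using hxg.le_right_last ht.symm
  exact ⟨⟨(hxg.strictInterlace (by omega) (by omega)).symm, hroot, hle, ⟨0, hroot, hle⟩⟩,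
    ⟨hxp.strictInterlace (by omega) (by omega), hxp.largestMergedRootOf_left⟩,
    ⟨hyx.strictInterlace (by omega) (by omega), hyx.largestMergedRootOf_right⟩,
    ⟨hyq.strictInterlace (by omega) (by omega), hyq.largestMergedRootOf_left⟩,
    ⟨hwy.strictInterlace (by omega) (by omega), hwy.largestMergedRootOf_right⟩,
    ⟨hwr.strictInterlace (by omega) (by omega), hwr.largestMergedRootOf_left⟩⟩

/-- For `n ≥ 3`, `l ≥ 1`, `3l < n`, the six strict interlacing relations between
`ξ·R_{l-1}, P_l, P_{l-1}, Q_l, Q_{l-1}, R_l, R_{l-1}` hold, with the largest merged root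
belonging to the indicated polynomial (and equal to `0` in case (1)). -/
theorem PQR_interlacing (n : ℕ) (hn : 3 ≤ n) (l : ℕ) (hl : 1 ≤ l) (h3l : 3 * l < n) :
    -- (1) ξ·R_{l-1} ← P_l : the largest root, namely 0, is a root of ξ·R_{l-1}
    (StrictInterlace (Polynomial.X * (PQR n (l - 1)).2.2) (PQR n l).1 ∧
      (Polynomial.X * (PQR n (l - 1)).2.2).IsRoot 0 ∧
      (∀ y : ℝ, ((Polynomial.X * (PQR n (l - 1)).2.2).IsRoot y ∨ (PQR n l).1.IsRoot y) → y ≤ 0) ∧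
      LargestMergedRootOf (Polynomial.X * (PQR n (l - 1)).2.2) (PQR n l).1
        (Polynomial.X * (PQR n (l - 1)).2.2)) ∧
    -- (2) P_l ← P_{l-1} reversed: largest root belongs to P_l
    (StrictInterlace (PQR n l).1 (PQR n (l - 1)).1 ∧
      LargestMergedRootOf (PQR n l).1 (PQR n (l - 1)).1 (PQR n l).1) ∧
    -- (3) Q_l and P_l : largest root belongs to P_l
    (StrictInterlace (PQR n l).2.1 (PQR n l).1 ∧
      LargestMergedRootOf (PQR n l).2.1 (PQR n l).1 (PQR n l).1) ∧
    -- (4) Q_l and Q_{l-1} : largest root belongs to Q_l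
    (StrictInterlace (PQR n l).2.1 (PQR n (l - 1)).2.1 ∧
      LargestMergedRootOf (PQR n l).2.1 (PQR n (l - 1)).2.1 (PQR n l).2.1) ∧
    -- (5) R_l and Q_l : largest root belongs to Q_l
    (StrictInterlace (PQR n l).2.2 (PQR n l).2.1 ∧
      LargestMergedRootOf (PQR n l).2.2 (PQR n l).2.1 (PQR n l).2.1) ∧
    -- (6) R_l and R_{l-1} : largest root belongs to R_l
    (StrictInterlace (PQR n l).2.2 (PQR n (l - 1)).2.2 ∧
      LargestMergedRootOf (PQR n l).2.2 (PQR n (l - 1)).2.2 (PQR n l).2.2) :=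
  PQR_interlacing_general n l hl h3l
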